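/- arXiv:2209.13480 — 3 statements merged into one kernel-verified Lean document; each statement's English description precedes it below -/
import Mathlib

section
/- Let M be a centered Gaussian field on ℝ₊² with covariance E[M(u)M(v)] = (u1∧v1)(u2∧v2)(u1∨v1 + u2∨v2), and for a rectangle A = [a1,b1)×[a2,b2) define the increment M(A) = M(b1,b2) − M(a1,b2) − M(b1,a2) + M(a1,a2). Then for real numbers u0 ≤ u1 and s0 ≤ s1 ≤ t0 ≤ t1, with A = [u0,u1)×[s0,s1) and B = [u0,u1)×[t0,t1), one has E[M(A)·M(B)] = (u1−u0)(s1−s0)(t1−t0). -/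
/-!
By bilinearity, the covariance of two rectangle increments is the double rectangle increment of
the covariance kernel, a signed sum of sixteen kernel values. The two rectangles share their first
side and their second sides are ordered (`s ≤ t`), so every `min` and `max` in these values is
resolved and the sum collapses to the product of the three side lengths.
-/

open MeasureTheory Set

/-- `rectIncr X a b = X([a.1, b.1) × [a.2, b.2))`. -/
def rectIncr {α β G : Type*} [AddCommGroup G] (f : α × β → G) (a b : α × β) : G :=
  f b - f (a.1, b.2) - f (b.1, a.2) + f a

section RectIncr

variable {α β : Type*}

theorem mul_rectIncr {R : Type*} [CommRing R] (x : R) (f : α × β → R) (a b : α × β) :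
    x * rectIncr f a b = rectIncr (fun p => x * f p) a b := by
  simp only [rectIncr]
  ring

theorem rectIncr_mul {R : Type*} [CommRing R] (f : α × β → R) (x : R) (a b : α × β) :
    rectIncr f a b * x = rectIncr (fun p => f p * x) a b := by
  simp only [rectIncr]
  ring

theorem rectIncr_congr_Icc {G : Type*} [AddCommGroup G] [Preorder α] [Preorder β]
    {f g : α × β → G} {a b : α × β} (hab : a ≤ b) (h : EqOn f g (Icc a b)) :
    rectIncr f a b = rectIncr g a b := by
  have corner₁ : ((a.1, b.2) : α × β) ∈ Icc a b := ⟨⟨le_rfl, hab.2⟩, ⟨hab.1, le_rfl⟩⟩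
  have corner₂ : ((b.1, a.2) : α × β) ∈ Icc a b := ⟨⟨hab.1, le_rfl⟩, ⟨le_rfl, hab.2⟩⟩
  simp only [rectIncr, h ⟨hab, le_rfl⟩, h corner₁, h corner₂, h ⟨le_rfl, hab⟩]

end RectIncr

section Integral

variable {α β Ω E : Type*} [MeasurableSpace Ω] {μ : Measure Ω}
  [NormedAddCommGroup E]

theorem integrable_rectIncr {F : α × β → Ω → E} (hF : ∀ p, Integrable (F p) μ) (a b : α × β) :
    Integrable (rectIncr F a b) μ :=
  (((hF _).sub (hF _)).sub (hF _)).add (hF _)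

theorem integral_rectIncr [NormedSpace ℝ E] {F : α × β → Ω → E}
    (hF : ∀ p, Integrable (F p) μ) (a b : α × β) :
    ∫ w, rectIncr F a b w ∂μ = rectIncr (fun p => ∫ w, F p w ∂μ) a b := by
  rw [rectIncr, rectIncr, integral_add' (((hF _).sub (hF _)).sub (hF _)) (hF _),
    integral_sub' ((hF _).sub (hF _)) (hF _), integral_sub' (hF _) (hF _)]

theorem integral_rectIncr_mul_rectIncr {M : α × β → Ω → ℝ}
    (hM : ∀ u v, Integrable (fun w => M u w * M v w) μ) (a b c d : α × β) :
    ∫ w, rectIncr M a b w * rectIncr M c d w ∂μ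
      = rectIncr (fun u => rectIncr (fun v => ∫ w, M u w * M v w ∂μ) c d) a b := by
  have hrow : ∀ u, (fun w => M u w * rectIncr M c d w)
      = rectIncr (fun v w => M u w * M v w) c d := fun u => by
    ext w
    exact mul_rectIncr _ (fun p => M p w) c d
  have hprod : (fun w => rectIncr M a b w * rectIncr M c d w)
      = rectIncr (fun u w => M u w * rectIncr M c d w) a b := by
    ext w
    exact rectIncr_mul (fun p => M p w) _ a b
  rw [hprod, integral_rectIncr fun u => hrow u ▸ integrable_rectIncr (hM u) c d]
  congr 1 with u
  rw [hrow, integral_rectIncr (hM u)]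

end Integral

def covKernel (u v : ℝ × ℝ) : ℝ :=
  min u.1 v.1 * min u.2 v.2 * (max u.1 v.1 + max u.2 v.2)

theorem rectIncr_rectIncr_covKernel {u0 u1 s0 s1 t0 t1 : ℝ}
    (hu : u0 ≤ u1) (hs : s0 ≤ s1) (hst : s1 ≤ t0) (ht : t0 ≤ t1) :
    rectIncr (fun u => rectIncr (covKernel u) (u0, t0) (u1, t1)) (u0, s0) (u1, s1)
      = (u1 - u0) * (s1 - s0) * (t1 - t0) := by
  simp only [rectIncr, covKernel, min_self, max_self,
    min_eq_left hu, max_eq_right hu, min_eq_right hu, max_eq_left hu,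
    min_eq_left (hs.trans (hst.trans ht)), max_eq_right (hs.trans (hst.trans ht)),
    min_eq_left (hs.trans hst), max_eq_right (hs.trans hst),
    min_eq_left (hst.trans ht), max_eq_right (hst.trans ht),
    min_eq_left hst, max_eq_right hst]
  ring

theorem stmt_5_general {Ω : Type*} [MeasurableSpace Ω] (μ : Measure Ω)
    (M : ℝ × ℝ → Ω → ℝ)
    (hL2 : ∀ u v : ℝ × ℝ, Integrable (fun w => M u w * M v w) μ)
    (hcov : ∀ u v : ℝ × ℝ, 0 ≤ u.1 → 0 ≤ u.2 → 0 ≤ v.1 → 0 ≤ v.2 →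
      ∫ w, M u w * M v w ∂μ
        = min u.1 v.1 * min u.2 v.2 * (max u.1 v.1 + max u.2 v.2))
    (u0 u1 s0 s1 t0 t1 : ℝ)
    (hu0 : 0 ≤ u0) (hu : u0 ≤ u1) (hs0 : 0 ≤ s0)
    (hs : s0 ≤ s1) (hst : s1 ≤ t0) (ht : t0 ≤ t1) :
    ∫ w, (M (u1, s1) w - M (u0, s1) w - M (u1, s0) w + M (u0, s0) w)
        * (M (u1, t1) w - M (u0, t1) w - M (u1, t0) w + M (u0, t0) w) ∂μ
      = (u1 - u0) * (s1 - s0) * (t1 - t0) := by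
  have hcov_eq : ∀ u ∈ Icc (u0, s0) (u1, s1), ∀ v ∈ Icc (u0, t0) (u1, t1),
      ∫ w, M u w * M v w ∂μ = covKernel u v := fun u hu' v hv' =>
    hcov u v (hu0.trans hu'.1.1) (hs0.trans hu'.1.2)
      (hu0.trans hv'.1.1) ((hs0.trans (hs.trans hst)).trans hv'.1.2)
  calc _ = rectIncr (fun u => rectIncr (fun v => ∫ w, M u w * M v w ∂μ) (u0, t0) (u1, t1))
          (u0, s0) (u1, s1) := integral_rectIncr_mul_rectIncr hL2 _ _ _ _
    _ = rectIncr (fun u => rectIncr (covKernel u) (u0, t0) (u1, t1)) (u0, s0) (u1, s1) :=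
        rectIncr_congr_Icc ⟨hu, hs⟩ fun u hu' =>
          rectIncr_congr_Icc ⟨hu, ht⟩ fun v hv' => hcov_eq u hu' v hv'
    _ = (u1 - u0) * (s1 - s0) * (t1 - t0) := rectIncr_rectIncr_covKernel hu hs hst ht

theorem stmt_5 {Ω : Type*} [MeasurableSpace Ω] (μ : Measure Ω) [IsProbabilityMeasure μ]
    (M : ℝ × ℝ → Ω → ℝ)
    (hL2 : ∀ u v : ℝ × ℝ, Integrable (fun w => M u w * M v w) μ)
    (hcentered : ∀ u : ℝ × ℝ, 0 ≤ u.1 → 0 ≤ u.2 → ∫ w, M u w ∂μ = 0)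
    (hcov : ∀ u v : ℝ × ℝ, 0 ≤ u.1 → 0 ≤ u.2 → 0 ≤ v.1 → 0 ≤ v.2 →
      ∫ w, M u w * M v w ∂μ
        = min u.1 v.1 * min u.2 v.2 * (max u.1 v.1 + max u.2 v.2))
    (u0 u1 s0 s1 t0 t1 : ℝ)
    (hu0 : 0 ≤ u0) (hu : u0 ≤ u1) (hs0 : 0 ≤ s0)
    (hs : s0 ≤ s1) (hst : s1 ≤ t0) (ht : t0 ≤ t1) :
    ∫ w, (M (u1, s1) w - M (u0, s1) w - M (u1, s0) w + M (u0, s0) w)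
        * (M (u1, t1) w - M (u0, t1) w - M (u1, t0) w + M (u0, t0) w) ∂μ
      = (u1 - u0) * (s1 - s0) * (t1 - t0) :=
  stmt_5_general μ M hL2 hcov u0 u1 s0 s1 t0 t1 hu0 hu hs0 hs hst ht
end

section
/- Let α ∈ (0, 1/2] and t1, t2 > 0. Then ∫_0^{t2}∫_0^{t1} s1^{α−1}·(s1+s2)^{α−2} ds1 ds2 = +∞. -/
/-!
On the triangle `s₂ < s₁` near the corner `s = 0` we have `s₁ + s₂ ≤ 2 s₁`, so the integrand
is at least `2 ^ (α - 2) * s₁ ^ (2α - 3)`. Integrating out `s₂` over `(0, s₁)` leaves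
`2 ^ (α - 2) * s₁ ^ (2α - 2)`, which is not integrable at `0` once `2α - 2 ≤ -1`.
-/

open MeasureTheory Set

theorem setLIntegral_Ioo_rpow_eq_top {r ε : ℝ} (hr : r ≤ -1) (hε : 0 < ε) :
    ∫⁻ x in Ioo 0 ε, ENNReal.ofReal (x ^ r) = ⊤ := by
  by_contra h
  have hnonneg : 0 ≤ᵐ[volume.restrict (Ioo 0 ε)] fun x : ℝ ↦ x ^ r := by
    filter_upwards [ae_restrict_mem measurableSet_Ioo] with x hx using Real.rpow_nonneg hx.1.le r
  have hint : IntegrableOn (fun x : ℝ ↦ x ^ r) (Ioo 0 ε) :=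
    (lintegral_ofReal_ne_top_iff_integrable (by fun_prop) hnonneg).1 h
  rw [intervalIntegral.integrableOn_Ioo_rpow_iff hε] at hint
  linarith

theorem two_rpow_mul_rpow_add_le_rpow_mul_add_rpow {a b x y : ℝ} (hb : b ≤ 0) (hx : 0 < x) (hy : 0 < y) (hyx : y ≤ x) :
    2 ^ b * x ^ (a + b) ≤ x ^ a * (x + y) ^ b := by
  calc 2 ^ b * x ^ (a + b) = x ^ a * (2 * x) ^ b := by
        rw [Real.mul_rpow zero_le_two hx.le, Real.rpow_add hx]
        ring
    _ ≤ x ^ a * (x + y) ^ b :=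
        mul_le_mul_of_nonneg_left (Real.rpow_le_rpow_of_nonpos (by positivity) (by linarith) hb)
          (Real.rpow_nonneg hx.le a)

theorem le_setLIntegral_Ioo_rpow_mul_add_rpow {a b x T : ℝ} (hb : b ≤ 0) (hx : 0 < x)
    (hxT : x ≤ T) :
    ENNReal.ofReal (2 ^ b * x ^ (a + b + 1)) ≤
      ∫⁻ y in Ioo 0 T, ENNReal.ofReal (x ^ a * (x + y) ^ b) := by
  calc ENNReal.ofReal (2 ^ b * x ^ (a + b + 1))
      = ∫⁻ _ in Ioo 0 x, ENNReal.ofReal (2 ^ b * x ^ (a + b)) := by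
        rw [setLIntegral_const, Real.volume_Ioo, sub_zero, ← ENNReal.ofReal_mul (by positivity),
          Real.rpow_add_one hx.ne', mul_assoc]
    _ ≤ ∫⁻ y in Ioo 0 x, ENNReal.ofReal (x ^ a * (x + y) ^ b) :=
        setLIntegral_mono' measurableSet_Ioo fun y hy ↦
          ENNReal.ofReal_le_ofReal (two_rpow_mul_rpow_add_le_rpow_mul_add_rpow hb hx hy.1 hy.2.le)
    _ ≤ ∫⁻ y in Ioo 0 T, ENNReal.ofReal (x ^ a * (x + y) ^ b) :=
        lintegral_mono_set (Ioo_subset_Ioo_right hxT)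

theorem stmt_9_general (α t1 t2 : ℝ) (hα2 : α ≤ 1 / 2) (ht1 : 0 < t1) (ht2 : 0 < t2) :
    ∫⁻ s in Set.Ioo 0 t1 ×ˢ Set.Ioo 0 t2,
        ENNReal.ofReal (s.1 ^ (α - 1) * (s.1 + s.2) ^ (α - 2)) = ⊤ := by
  set ε := min t1 t2
  have hε : 0 < ε := lt_min ht1 ht2
  rw [Measure.volume_eq_prod, ← Measure.prod_restrict, lintegral_prod _ (by fun_prop), eq_top_iff]
  calc ⊤ = ∫⁻ x in Ioo 0 ε, ENNReal.ofReal (2 ^ (α - 2) * x ^ (α - 1 + (α - 2) + 1)) := by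
        simp_rw [ENNReal.ofReal_mul (by positivity : (0 : ℝ) ≤ 2 ^ (α - 2))]
        rw [lintegral_const_mul _ (by fun_prop),
          setLIntegral_Ioo_rpow_eq_top (by linarith) hε, ENNReal.mul_top (by positivity)]
    _ ≤ ∫⁻ x in Ioo 0 ε, ∫⁻ y in Ioo 0 t2, ENNReal.ofReal (x ^ (α - 1) * (x + y) ^ (α - 2)) :=
        setLIntegral_mono' measurableSet_Ioo fun x hx ↦
          le_setLIntegral_Ioo_rpow_mul_add_rpow (by linarith) hx.1 (hx.2.le.trans (min_le_right _ _))
    _ ≤ _ := lintegral_mono_set (Ioo_subset_Ioo_right (min_le_left _ _))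

theorem stmt_9 (α t1 t2 : ℝ) (hα1 : 0 < α) (hα2 : α ≤ 1 / 2) (ht1 : 0 < t1) (ht2 : 0 < t2) :
    ∫⁻ s in Set.Ioo 0 t1 ×ˢ Set.Ioo 0 t2,
        ENNReal.ofReal (s.1 ^ (α - 1) * (s.1 + s.2) ^ (α - 2)) = ⊤ :=
  stmt_9_general α t1 t2 hα2 ht1 ht2
end

section
/- Let S be the semiring of half-open boxes [u, v) in ℝ^k (together with the empty set), and let ν : S → ℝ be nonnegative, finitely additive, and satisfy ν([−m,m)^k) < ∞ for all m > 0. Suppose there exists a measure μ on the Borel σ-algebra of ℝ^k, finite on bounded boxes, such that ν(A) ≤ μ(A) for all A ∈ S. Then ν is countably additive on S, and hence extends uniquely to a σ-finite Borel measure on ℝ^k. -/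
/-!
Since `ν ≤ μ` on boxes and `μ` is finite on bounded sets, the content `ν` is σ-subadditive: if a box
`S` is the union of boxes `A i`, then `S \ (A 0 ∪ … ∪ A (n - 1))` is a finite disjoint union of
boxes, so `ν S ≤ ∑ i < n, ν (A i) + μ (S \ ⋃ i < n, A i)`, and the last term tends to `0` by
continuity of `μ` from above. Carathéodory's theorem then extends `ν` to a measure, which is unique
because boxes form a π-system generating the Borel sets and `ℝ^k` is a countable union of boxes of
finite measure.
-/

open MeasureTheory Set Function Filter Topology
open scoped ENNReal

/-- The semiring of half-open boxes `[u, v)` in `ℝ^k`, together with the empty set. -/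
def Box (k : ℕ) : Set (Set (Fin k → ℝ)) :=
  {A | A = ∅ ∨ ∃ u v : Fin k → ℝ, A = Set.univ.pi fun i => Set.Ico (u i) (v i)}

namespace Set

lemma exists_fin_three_partition_Ico {α : Type*} [LinearOrder α] (u v a b : α) :
    ∃ P : Fin 3 → Set α, (∀ j, ∃ l r, P j = Ico l r) ∧ Pairwise (Disjoint on P) ∧
      ⋃ j, P j = Ico u v ∧ P 1 = Ico u v ∩ Ico a b := by
  obtain ⟨c, hc⟩ : ∃ c, c = max u (min a v) := ⟨_, rfl⟩
  obtain ⟨d, hd⟩ : ∃ d, d = max c (min b v) := ⟨_, rfl⟩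
  refine ⟨![Ico u c, Ico c d, Ico d v], fun j => ?_, fun i j hij => ?_, ?_, ?_⟩
  · fin_cases j <;> exact ⟨_, _, rfl⟩
  · rw [onFun, Set.disjoint_left]
    intro x
    fin_cases i <;> fin_cases j <;>
      simp only [ne_eq, Fin.isValue, Fin.zero_eta, Fin.mk_one, Fin.reduceFinMk, Matrix.cons_val_zero,
        Matrix.cons_val_one, Matrix.cons_val, mem_Ico] at hij ⊢ <;> grind
  · ext x
    simp only [mem_iUnion, Fin.exists_fin_succ, Fin.isValue, Matrix.cons_val_zero, mem_Ico,
      Matrix.cons_val_succ, Matrix.cons_val_fin_one, exists_const]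
    grind
  · ext x
    simp only [Fin.isValue, Matrix.cons_val_one, Matrix.cons_val_zero, mem_Ico, mem_inter_iff]
    grind

lemma univ_pi_sdiff_univ_pi_eq_biUnion {ι κ : Type*} {α : ι → Type*} {s t : ∀ i, Set (α i)}
    (P : ∀ i, κ → Set (α i)) (j₀ : κ) (hP : ∀ i, ⋃ j, P i j = s i)
    (hP₀ : ∀ i, P i j₀ = s i ∩ t i) (hdisj : ∀ i, Pairwise (Disjoint on P i)) :
    univ.pi s \ univ.pi t = ⋃ (σ : ι → κ) (_ : σ ≠ fun _ => j₀), univ.pi fun i => P i (σ i) := by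
  ext x
  simp only [mem_sdiff, mem_univ_pi, mem_iUnion, exists_prop]
  constructor
  · rintro ⟨hs, ht⟩
    choose σ hσ using fun i => mem_iUnion.mp ((hP i).symm ▸ hs i)
    refine ⟨σ, fun hσ₀ => ht fun i => ?_, hσ⟩
    have := hσ i
    rw [hσ₀, hP₀] at this
    exact this.2
  · rintro ⟨σ, hσ, hx⟩
    have hs : ∀ i, x i ∈ s i := fun i => (hP i).subset (mem_iUnion_of_mem _ (hx i))
    refine ⟨hs, fun ht => hσ (funext fun i => ?_)⟩
    by_contra hne
    exact Set.disjoint_left.mp (hdisj i hne) (hx i) (hP₀ i ▸ ⟨hs i, ht i⟩)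

end Set

lemma ENNReal.eq_tsum_of_ofReal_eq_tsum_ofReal {ι : Type*} {a : ℝ} {g : ι → ℝ} (ha : 0 ≤ a)
    (hg : ∀ i, 0 ≤ g i) (h : ENNReal.ofReal a = ∑' i, ENNReal.ofReal (g i)) : a = ∑' i, g i := by
  rw [← ENNReal.toReal_ofReal ha, h, ENNReal.tsum_toReal_eq fun _ => ENNReal.ofReal_ne_top]
  exact tsum_congr fun i => ENNReal.toReal_ofReal (hg i)

namespace MeasureTheory

/-- Cutting each coordinate interval of `[u, v)` at the endpoints of `[a, b)` writes
`[u, v) \ [a, b)` as the union of all the resulting product pieces except the middle one. -/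
theorem isSetSemiring_univ_pi_Ico {ι α : Type*} [Finite ι] [LinearOrder α] :
    IsSetSemiring
      {A : Set (ι → α) | A = ∅ ∨ ∃ u v : ι → α, A = univ.pi fun i => Ico (u i) (v i)} where
  empty_mem := Or.inl rfl
  inter_mem := by
    rintro s (rfl | ⟨u, v, rfl⟩) t ht
    · exact Or.inl (empty_inter t)
    rcases ht with rfl | ⟨a, b, rfl⟩
    · exact Or.inl (inter_empty _)
    refine Or.inr ⟨fun i => max (u i) (a i), fun i => min (v i) (b i), ?_⟩
    simp only [← pi_inter_distrib, Ico_inter_Ico]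
  sdiff_eq_sUnion' := by
    classical
    have := Fintype.ofFinite ι
    rintro s (rfl | ⟨u, v, rfl⟩) t (rfl | ⟨a, b, rfl⟩)
    · exact ⟨∅, by simp⟩
    · exact ⟨∅, by simp⟩
    · exact ⟨{univ.pi fun i => Ico (u i) (v i)}, by simpa using Or.inr ⟨u, v, rfl⟩⟩
    choose P hPIco hPdisj hPU hP₁ using fun i => exists_fin_three_partition_Ico (u i) (v i) (a i) (b i)
    choose l r hlr using hPIco
    let piece : (ι → Fin 3) → Set (ι → α) := fun σ => univ.pi fun i => P i (σ i)
    refine ⟨(Finset.univ.filter (· ≠ fun _ => 1)).image piece, ?_, ?_, ?_⟩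
    · simp only [Finset.coe_image, image_subset_iff]
      exact fun σ _ => Or.inr ⟨fun i => l i (σ i), fun i => r i (σ i), by simp only [piece, hlr]⟩
    · simp only [Finset.coe_image]
      rintro _ ⟨σ, -, rfl⟩ _ ⟨σ', -, rfl⟩ hne
      obtain ⟨i, hi⟩ := Function.ne_iff.mp (ne_of_apply_ne piece hne)
      exact disjoint_univ_pi.mpr ⟨i, hPdisj i hi⟩
    · rw [univ_pi_sdiff_univ_pi_eq_biUnion P 1 hPU hP₁ hPdisj]
      simp [piece]

variable {α : Type*} [MeasurableSpace α]

lemma tendsto_measure_iUnion_sdiff_biUnion_range (μ : Measure α) {f : ℕ → Set α}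
    (hf : ∀ i, NullMeasurableSet (f i) μ) (hfin : μ (⋃ i, f i) ≠ ∞) :
    Tendsto (fun n => μ ((⋃ i, f i) \ ⋃ i ∈ Finset.range n, f i)) atTop (𝓝 0) := by
  have hanti : Antitone fun n => (⋃ i, f i) \ ⋃ i ∈ Finset.range n, f i :=
    fun m n hmn => sdiff_subset_sdiff_right <|
      biUnion_subset_biUnion_left fun i hi => Finset.range_subset_range.mpr hmn hi
  have hinter : ⋂ n, (⋃ i, f i) \ ⋃ i ∈ Finset.range n, f i = ∅ := by
    refine eq_empty_of_forall_notMem fun x hx => ?_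
    obtain ⟨i, hi⟩ := mem_iUnion.mp (mem_iInter.mp hx 0).1
    exact (mem_iInter.mp hx (i + 1)).2 (mem_biUnion (Finset.self_mem_range_succ i) hi)
  have := tendsto_measure_iInter_atTop (s := fun n => (⋃ i, f i) \ ⋃ i ∈ Finset.range n, f i)
    (fun n => (NullMeasurableSet.iUnion hf).diff
      (.biUnion (Finset.range n).countable_toSet fun i _ => hf i))
    hanti ⟨0, by simpa using hfin⟩
  rwa [hinter, measure_empty] at this

theorem AddContent.isSigmaSubadditive_of_le_measure {C : Set (Set α)} {m : AddContent ℝ≥0∞ C}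
    (hC : IsSetSemiring C) (hCm : ∀ s ∈ C, MeasurableSet s) (μ : Measure α)
    (hμ : ∀ s ∈ C, μ s ≠ ∞) (hm : ∀ s ∈ C, m s ≤ μ s) : m.IsSigmaSubadditive := by
  classical
  intro f hf hU
  have hI : ∀ n, ↑((Finset.range n).image f) ⊆ C := fun n => by
    rw [Finset.coe_image, image_subset_iff]
    exact fun i _ => hf i
  have hIU : ∀ n, ∀ t ∈ (Finset.range n).image f, t ⊆ ⋃ i, f i := fun n => by
    simpa using fun i _ => subset_iUnion f i
  have key : ∀ n, m (⋃ i, f i) ≤ ∑ i ∈ Finset.range n, m (f i) +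
      μ ((⋃ i, f i) \ ⋃ i ∈ Finset.range n, f i) := fun n => by
    set I := (Finset.range n).image f
    set D := hC.disjointOfDiffUnion hU (hI n)
    have hD : ↑D ⊆ C := hC.disjointOfDiffUnion_subset hU (hI n)
    have hμD : ∑ u ∈ D, μ u = μ (⋃₀ ↑D) := by
      rw [sUnion_eq_biUnion]
      exact (measure_biUnion_finset (hC.pairwiseDisjoint_disjointOfDiffUnion hU (hI n))
        fun u hu => hCm u (hD hu)).symm
    calc m (⋃ i, f i) ≤ ∑ u ∈ I ∪ D, m u :=
          addContent_le_sum_of_subset_sUnion hC (by simpa using ⟨hI n, hD⟩) hU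
            (hC.sUnion_union_disjointOfDiffUnion_of_subset hU (hI n) (hIU n)).ge
      _ ≤ ∑ u ∈ I, m u + ∑ u ∈ D, m u := le_self_add.trans_eq Finset.sum_union_inter
      _ ≤ ∑ i ∈ Finset.range n, m (f i) + ∑ u ∈ D, μ u :=
          add_le_add (Finset.sum_image_le_of_nonneg fun _ _ => zero_le)
            (Finset.sum_le_sum fun u hu => hm u (hD hu))
      _ = ∑ i ∈ Finset.range n, m (f i) + μ ((⋃ i, f i) \ ⋃ i ∈ Finset.range n, f i) := by
          rw [hμD, ← hC.sdiff_sUnion_eq_sUnion_disjointOfDiffUnion hU (hI n)]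
          simp
  have hlim := (ENNReal.tendsto_nat_tsum fun i => m (f i)).add
    (tendsto_measure_iUnion_sdiff_biUnion_range μ (fun i => (hCm _ (hf i)).nullMeasurableSet)
      (hμ _ hU))
  rw [add_zero] at hlim
  exact ge_of_tendsto' hlim key

def AddContent.ofFinAdditive {G : Type*} [AddCommMonoid G] {C : Set (Set α)} (m : Set α → G)
    (h_empty : m ∅ = 0)
    (h_add : ∀ (n : ℕ) (A : Fin n → Set α), (∀ i, A i ∈ C) → Pairwise (Disjoint on A) →
      (⋃ i, A i) ∈ C → m (⋃ i, A i) = ∑ i, m (A i)) :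
    AddContent G C where
  toFun := m
  empty' := h_empty
  sUnion' I hI hdisj hU := by
    let A : Fin I.card → Set α := fun j => I.equivFin.symm j
    have hAU : ⋃ j, A j = ⋃₀ ↑I := by
      rw [sUnion_eq_iUnion]
      exact I.equivFin.symm.iSup_comp (g := fun s : I => (s : Set α))
    have hAdisj : Pairwise (Disjoint on A) := fun i j hij =>
      hdisj (I.equivFin.symm i).2 (I.equivFin.symm j).2
        fun h => hij (I.equivFin.symm.injective (Subtype.ext h))
    rw [← hAU, h_add _ A (fun j => hI (I.equivFin.symm j).2) hAdisj (hAU ▸ hU),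
      ← Finset.sum_coe_sort I m]
    exact I.equivFin.symm.sum_comp fun s : I => m s

end MeasureTheory

lemma isSetSemiring_box (k : ℕ) : IsSetSemiring (Box k) := isSetSemiring_univ_pi_Ico

lemma isCountablySpanning_Ico_real :
    IsCountablySpanning {S : Set ℝ | ∃ l u, l < u ∧ Ico l u = S} := by
  refine ⟨fun n => Ico (-(n + 1 : ℝ)) (n + 1), fun n => ⟨_, _, by linarith, rfl⟩, ?_⟩
  refine eq_univ_of_forall fun x => mem_iUnion.mpr ?_
  obtain ⟨n, hn⟩ := exists_nat_gt |x|
  obtain ⟨h₁, h₂⟩ := abs_lt.mp hn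
  exact ⟨n, by constructor <;> linarith⟩

lemma pi_eq_generateFrom_box (k : ℕ) :
    (MeasurableSpace.pi : MeasurableSpace (Fin k → ℝ)) = MeasurableSpace.generateFrom (Box k) := by
  refine le_antisymm ?_ (MeasurableSpace.generateFrom_le ?_)
  · rw [← generateFrom_eq_pi (fun _ => (borel_eq_generateFrom_Ico ℝ).symm.trans
      BorelSpace.measurable_eq.symm) fun _ => isCountablySpanning_Ico_real]
    refine MeasurableSpace.generateFrom_mono ?_
    rintro _ ⟨t, ht, rfl⟩
    choose l u _ hlu using fun i => ht i (mem_univ i)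
    exact Or.inr ⟨l, u, by simp only [hlu]⟩
  · rintro _ (rfl | ⟨u, v, rfl⟩)
    · exact MeasurableSet.empty
    · exact MeasurableSet.univ_pi fun i => measurableSet_Ico

lemma cube_mem_box (k n : ℕ) : (univ.pi fun _ => Ico (-(n : ℝ)) n) ∈ Box k :=
  Or.inr ⟨_, _, rfl⟩

lemma iUnion_cube_eq_univ (k : ℕ) : ⋃ n : ℕ, (univ.pi fun _ : Fin k => Ico (-(n : ℝ)) n) = univ := by
  refine eq_univ_of_forall fun x => mem_iUnion.mpr ?_
  obtain ⟨n, hn⟩ := exists_nat_gt ‖x‖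
  refine ⟨n, fun i _ => ?_⟩
  obtain ⟨h₁, h₂⟩ := abs_lt.mp ((norm_le_pi_norm x i).trans_lt hn)
  exact ⟨h₁.le, h₂⟩

lemma exists_subset_cube_of_mem_box {k : ℕ} {A : Set (Fin k → ℝ)} (hA : A ∈ Box k) :
    ∃ n : ℕ, A ⊆ univ.pi fun _ => Ico (-(n : ℝ)) n := by
  rcases hA with rfl | ⟨u, v, rfl⟩
  · exact ⟨0, empty_subset _⟩
  obtain ⟨n, hn⟩ := exists_nat_gt (max ‖u‖ ‖v‖)
  refine ⟨n, fun x hx i _ => ?_⟩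
  obtain ⟨hux, hxv⟩ := hx i (mem_univ i)
  have hu : |u i| < n := (norm_le_pi_norm u i).trans_lt ((le_max_left _ _).trans_lt hn)
  have hv : |v i| < n := (norm_le_pi_norm v i).trans_lt ((le_max_right _ _).trans_lt hn)
  exact ⟨by linarith [neg_abs_le (u i)], by linarith [le_abs_self (v i)]⟩

lemma measure_ne_top_of_mem_box {k : ℕ} {μ : Measure (Fin k → ℝ)}
    (hμ : ∀ n : ℕ, μ (univ.pi fun _ => Ico (-(n : ℝ)) n) < ∞) {A : Set (Fin k → ℝ)}
    (hA : A ∈ Box k) : μ A ≠ ∞ := by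
  obtain ⟨n, hn⟩ := exists_subset_cube_of_mem_box hA
  exact ((measure_mono hn).trans_lt (hμ n)).ne

lemma MeasureTheory.Measure.ext_of_box {k : ℕ} {ρ ρ' : Measure (Fin k → ℝ)}
    (hρ : ∀ n : ℕ, ρ (univ.pi fun _ => Ico (-(n : ℝ)) n) ≠ ∞) (h : ∀ A ∈ Box k, ρ A = ρ' A) :
    ρ = ρ' :=
  Measure.ext_of_generateFrom_of_iUnion (Box k) _ (pi_eq_generateFrom_box k)
    (isSetSemiring_box k).isPiSystem (iUnion_cube_eq_univ k) (cube_mem_box k) hρ h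

theorem stmt_19 (k : ℕ) (ν : Set (Fin k → ℝ) → ℝ)
    (hν0 : ν ∅ = 0)
    (hνnn : ∀ A ∈ Box k, 0 ≤ ν A)
    (hνadd : ∀ (n : ℕ) (A : Fin n → Set (Fin k → ℝ)),
      (∀ i, A i ∈ Box k) → Pairwise (Function.onFun Disjoint A) → (⋃ i, A i) ∈ Box k →
      ν (⋃ i, A i) = ∑ i, ν (A i))
    (μ : Measure (Fin k → ℝ))
    (hμfin : ∀ m : ℕ, μ (Set.univ.pi fun _ => Set.Ico (-(m : ℝ)) m) < ⊤)
    (hdom : ∀ A ∈ Box k, ENNReal.ofReal (ν A) ≤ μ A) :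
    (∀ A : ℕ → Set (Fin k → ℝ), (∀ n, A n ∈ Box k) → Pairwise (Function.onFun Disjoint A) →
      (⋃ n, A n) ∈ Box k → ν (⋃ n, A n) = ∑' n, ν (A n))
    ∧ ∃! ρ : Measure (Fin k → ℝ), ∀ A ∈ Box k, ρ A = ENNReal.ofReal (ν A) := by
  let m : AddContent ℝ≥0∞ (Box k) :=
    AddContent.ofFinAdditive (fun A => ENNReal.ofReal (ν A)) (by simp [hν0]) fun n A hA hd hU => by
      rw [hνadd n A hA hd hU, ENNReal.ofReal_sum_of_nonneg fun i _ => hνnn _ (hA i)]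
  have hgen := pi_eq_generateFrom_box k
  have hsub : m.IsSigmaSubadditive := m.isSigmaSubadditive_of_le_measure (isSetSemiring_box k)
    (fun A hA => hgen ▸ MeasurableSpace.measurableSet_generateFrom hA) μ
    (fun A hA => measure_ne_top_of_mem_box hμfin hA) hdom
  have hm_eq : ∀ A ∈ Box k, m.measure (isSetSemiring_box k) hgen.le hsub A = m A :=
    fun A hA => m.measure_eq (isSetSemiring_box k) hgen hsub hA
  refine ⟨fun A hA hd hU => ?_, _, hm_eq, fun ρ hρ => ?_⟩
  · exact ENNReal.eq_tsum_of_ofReal_eq_tsum_ofReal (hνnn _ hU) (fun n => hνnn _ (hA n))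
      (addContent_iUnion_eq_tsum_of_disjoint_of_IsSigmaSubadditive (isSetSemiring_box k) hsub
        A hA hU hd)
  · refine Measure.ext_of_box (fun n => (hρ _ (cube_mem_box k n)).trans_ne ENNReal.ofReal_ne_top)
      fun A hA => ?_
    rw [hρ A hA, hm_eq A hA]
    rfl
end
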